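/- Let C be any comb domain, i.e. C = ℂ ∖ ⋃_{n∈ℤ} {x_n + iy : |y| ≥ b_n} for a strictly increasing real sequence (x_n)_{n∈ℤ} with x_0 = 0 and inf_{n∈ℤ}(x_n − x_{n−1}) > 0 and positive reals (b_n)_{n∈ℤ}. Then the Hardy number of C satisfies h(C) ≥ 1. -/

import Mathlib

open Complex Set MeasureTheory

/-- `f` belongs to the Hardy space `H^p(𝔻)`: it is holomorphic on the unit disk and the
integral means of `|f|^p` over circles of radius `r < 1` are uniformly bounded. -/
def MemHardy (p : ℝ) (f : ℂ → ℂ) : Prop :=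
  DifferentiableOn ℂ f (Metric.ball 0 1) ∧
  ∃ M : ℝ, ∀ r : ℝ, 0 < r → r < 1 →
    (∫ θ in (0:ℝ)..(2 * Real.pi),
        ‖f ((r : ℂ) * Complex.exp ((θ : ℂ) * Complex.I))‖ ^ p) ≤ M

/-- `f` is a Riemann map of the unit disk onto `D`: a holomorphic injection of `𝔻`
with image `D` (hence a conformal bijection from `𝔻` onto `D`). -/
def IsRiemannMap (f : ℂ → ℂ) (D : Set ℂ) : Prop :=
  DifferentiableOn ℂ f (Metric.ball 0 1) ∧ Set.InjOn f (Metric.ball 0 1) ∧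
  f '' (Metric.ball 0 1) = D

/-- The Hardy number of (the domain uniformized by) `f`:
the supremum of all `p > 0` with `f ∈ H^p(𝔻)`, as an extended nonnegative real. -/
noncomputable def hardyNumber (f : ℂ → ℂ) : ENNReal :=
  sSup {x : ENNReal | ∃ p : ℝ, 0 < p ∧ MemHardy p f ∧ x = ENNReal.ofReal p}

/-- `C` is a comb domain: the plane minus the vertical rays `{xₙ + iy : |y| ≥ bₙ}`,
where `(xₙ)` is strictly increasing with `x₀ = 0` and gaps bounded below by a positive
constant, and the `bₙ` are positive. -/
def IsCombDomain (C : Set ℂ) : Prop :=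
  ∃ (x : ℤ → ℝ) (b : ℤ → ℝ),
    StrictMono x ∧ x 0 = 0 ∧ (∃ δ : ℝ, 0 < δ ∧ ∀ n : ℤ, δ ≤ x n - x (n - 1)) ∧
    (∀ n, 0 < b n) ∧
    C = (⋃ n : ℤ, {z : ℂ | z.re = x n ∧ b n ≤ |z.im|})ᶜ

/-!
Only the central tooth `{iy : |y| ≥ b₀}` of the comb matters. Since `f` omits it,
`A = f² + b₀²` omits `(-∞, 0]`, so `A ^ q` is holomorphic for real `q`. For `0 ≤ q < 1/2`,
`|arg A| < π` gives `‖A‖ ^ q * cos (q π) ≤ Re (A ^ q)`, and the mean value property for the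
harmonic function `Re (A ^ q)` bounds the circle means of `‖A‖ ^ q` by `Re (A 0 ^ q) / cos (q π)`.
Finally `‖f‖ ^ p ≤ ‖A‖ ^ (p / 2) + b₀ ^ p`, so `f ∈ H^p` for every `p < 1`.
-/

open Real

theorem norm_rpow_mul_cos_le_re_cpow (A : ℂ) {q : ℝ} (hq0 : 0 ≤ q) (hq1 : q ≤ 1) :
    ‖A‖ ^ q * Real.cos (q * π) ≤ (A ^ (q : ℂ)).re := by
  rw [cpow_ofReal_re]
  gcongr
  calc Real.cos (q * π) ≤ Real.cos |arg A * q| := by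
        apply Real.cos_le_cos_of_nonneg_of_le_pi (abs_nonneg _) (by nlinarith [pi_pos])
        rw [abs_mul, abs_of_nonneg hq0, mul_comm]
        exact mul_le_mul_of_nonneg_left (abs_arg_le_pi A) hq0
    _ = Real.cos (arg A * q) := Real.cos_abs _

theorem circleAverage_norm_rpow_le_of_mapsTo_slitPlane {A : ℂ → ℂ}
    (hA : DifferentiableOn ℂ A (Metric.ball 0 1)) (hslit : MapsTo A (Metric.ball 0 1) slitPlane)
    {q : ℝ} (hq0 : 0 ≤ q) (hq : q < 1 / 2) {r : ℝ} (hr0 : 0 < r) (hr1 : r < 1) :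
    circleAverage (fun z ↦ ‖A z‖ ^ q) 0 r ≤ (A 0 ^ (q : ℂ)).re / Real.cos (q * π) := by
  set H : ℂ → ℂ := fun z ↦ A z ^ (q : ℂ)
  have hH : DifferentiableOn ℂ H (Metric.ball 0 1) := hA.cpow (differentiableOn_const _) hslit
  have hsphere : Metric.sphere (0 : ℂ) r ⊆ Metric.ball 0 1 :=
    Metric.sphere_subset_closedBall.trans (Metric.closedBall_subset_ball hr1)
  have hcos : 0 < Real.cos (q * π) :=
    Real.cos_pos_of_mem_Ioo ⟨by nlinarith [pi_pos], by nlinarith [pi_pos]⟩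
  have hmean : circleAverage H 0 r = H 0 := by
    refine DiffContOnCl.circleAverage ⟨hH.mono ?_, hH.continuousOn.mono ?_⟩
    · exact Metric.ball_subset_ball (by rw [abs_of_pos hr0]; exact hr1.le)
    · rw [abs_of_pos hr0, closure_ball _ hr0.ne']
      exact Metric.closedBall_subset_ball hr1
  have hHint : CircleIntegrable H 0 r := (hH.continuousOn.mono hsphere).circleIntegrable hr0.le
  rw [le_div_iff₀ hcos]
  calc circleAverage (fun z ↦ ‖A z‖ ^ q) 0 r * Real.cos (q * π)
      = circleAverage (Real.cos (q * π) • fun z ↦ ‖A z‖ ^ q) 0 r := by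
        rw [circleAverage_smul, smul_eq_mul, mul_comm]
    _ ≤ circleAverage (reCLM ∘ H) 0 r := by
        refine circleAverage_mono ?_ ?_ fun z _ ↦ ?_
        · exact ((((hA.continuousOn.mono hsphere).norm).rpow_const fun _ _ ↦ Or.inr hq0).const_smul
            _).circleIntegrable hr0.le
        · exact (reCLM.continuous.comp_continuousOn (hH.continuousOn.mono hsphere)).circleIntegrable
            hr0.le
        · simpa [mul_comm] using norm_rpow_mul_cos_le_re_cpow (A z) hq0 (by linarith)
    _ = (A 0 ^ (q : ℂ)).re := by rw [reCLM.circleAverage_comp_comm hHint, hmean]; rfl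

theorem sq_add_sq_mem_slitPlane {w : ℂ} {β : ℝ} (hw : ¬(w.re = 0 ∧ β ≤ |w.im|)) :
    w ^ 2 + (β : ℂ) ^ 2 ∈ slitPlane := by
  rw [mem_slitPlane_iff]
  have hre : (w ^ 2 + (β : ℂ) ^ 2).re = w.re ^ 2 - w.im ^ 2 + β ^ 2 := by simp [sq]
  have him : (w ^ 2 + (β : ℂ) ^ 2).im = 2 * w.re * w.im := by simp [sq]; ring
  rw [hre, him]
  by_cases hre0 : w.re = 0
  · have him_lt : |w.im| < β := lt_of_not_ge fun h ↦ hw ⟨hre0, h⟩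
    left
    nlinarith [sq_abs w.im, abs_nonneg w.im]
  · by_cases him0 : w.im = 0
    · have : 0 < w.re ^ 2 := by positivity
      left
      nlinarith [him0]
    · right
      simp [hre0, him0]

theorem norm_rpow_le_norm_sq_add_sq_rpow (w : ℂ) {β p : ℝ} (hβ : 0 ≤ β) (hp0 : 0 ≤ p)
    (hp2 : p ≤ 2) : ‖w‖ ^ p ≤ ‖w ^ 2 + (β : ℂ) ^ 2‖ ^ (p / 2) + β ^ p := by
  have hsq : ‖w‖ ^ 2 ≤ ‖w ^ 2 + (β : ℂ) ^ 2‖ + β ^ 2 :=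
    calc ‖w‖ ^ 2 = ‖(w ^ 2 + (β : ℂ) ^ 2) - (β : ℂ) ^ 2‖ := by rw [add_sub_cancel_right, norm_pow]
      _ ≤ ‖w ^ 2 + (β : ℂ) ^ 2‖ + ‖(β : ℂ) ^ 2‖ := norm_sub_le _ _
      _ = ‖w ^ 2 + (β : ℂ) ^ 2‖ + β ^ 2 := by rw [norm_pow, norm_real, Real.norm_of_nonneg hβ]
  have half_pow {x : ℝ} (hx : 0 ≤ x) : (x ^ 2) ^ (p / 2) = x ^ p := by
    rw [← Real.rpow_natCast_mul hx, Nat.cast_ofNat, mul_div_cancel₀ _ two_ne_zero]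
  calc ‖w‖ ^ p = (‖w‖ ^ 2) ^ (p / 2) := (half_pow (norm_nonneg w)).symm
    _ ≤ (‖w ^ 2 + (β : ℂ) ^ 2‖ + β ^ 2) ^ (p / 2) := by gcongr
    _ ≤ ‖w ^ 2 + (β : ℂ) ^ 2‖ ^ (p / 2) + (β ^ 2) ^ (p / 2) :=
      Real.rpow_add_le_add_rpow (norm_nonneg _) (sq_nonneg β) (by linarith) (by linarith)
    _ = ‖w ^ 2 + (β : ℂ) ^ 2‖ ^ (p / 2) + β ^ p := by rw [half_pow hβ]

theorem memHardy_of_circleAverage_le {f : ℂ → ℂ} {p M : ℝ}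
    (hf : DifferentiableOn ℂ f (Metric.ball 0 1))
    (hM : ∀ r, 0 < r → r < 1 → circleAverage (fun z ↦ ‖f z‖ ^ p) 0 r ≤ M) : MemHardy p f := by
  refine ⟨hf, 2 * π * M, fun r hr0 hr1 ↦ ?_⟩
  have h := hM r hr0 hr1
  rw [circleAverage_def, smul_eq_mul, inv_mul_le_iff₀ two_pi_pos] at h
  simpa [circleMap] using h

theorem memHardy_of_mapsTo_compl_imaginaryRays {f : ℂ → ℂ} {β p : ℝ}
    (hf : DifferentiableOn ℂ f (Metric.ball 0 1)) (hβ : 0 ≤ β)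
    (hmaps : MapsTo f (Metric.ball 0 1) {z | z.re = 0 ∧ β ≤ |z.im|}ᶜ) (hp0 : 0 ≤ p)
    (hp1 : p < 1) : MemHardy p f := by
  set A : ℂ → ℂ := fun z ↦ f z ^ 2 + (β : ℂ) ^ 2
  have hA : DifferentiableOn ℂ A (Metric.ball 0 1) := (hf.pow 2).add_const _
  have hslit : MapsTo A (Metric.ball 0 1) slitPlane := fun _ hz ↦
    sq_add_sq_mem_slitPlane (hmaps hz)
  refine memHardy_of_circleAverage_le hf
    (M := (A 0 ^ ((p / 2 : ℝ) : ℂ)).re / Real.cos (p / 2 * π) + β ^ p) fun r hr0 hr1 ↦ ?_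
  have hsphere : Metric.sphere (0 : ℂ) r ⊆ Metric.ball 0 1 :=
    Metric.sphere_subset_closedBall.trans (Metric.closedBall_subset_ball hr1)
  have hint {g : ℂ → ℝ} (hg : ContinuousOn g (Metric.ball 0 1)) : CircleIntegrable g 0 r :=
    (hg.mono hsphere).circleIntegrable hr0.le
  have hAq : CircleIntegrable (fun z ↦ ‖A z‖ ^ (p / 2)) 0 r :=
    hint (hA.continuousOn.norm.rpow_const fun _ _ ↦ Or.inr (by positivity))
  calc circleAverage (fun z ↦ ‖f z‖ ^ p) 0 r
      ≤ circleAverage (fun z ↦ ‖A z‖ ^ (p / 2) + β ^ p) 0 r :=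
        circleAverage_mono (hint (hf.continuousOn.norm.rpow_const fun _ _ ↦ Or.inr hp0))
          (hAq.add (circleIntegrable_const _ _ _)) fun z _ ↦
            norm_rpow_le_norm_sq_add_sq_rpow (f z) hβ hp0 (by linarith)
    _ = circleAverage (fun z ↦ ‖A z‖ ^ (p / 2)) 0 r + β ^ p := by
        rw [circleAverage_fun_add hAq (circleIntegrable_const _ _ _), circleAverage_const]
    _ ≤ (A 0 ^ ((p / 2 : ℝ) : ℂ)).re / Real.cos (p / 2 * π) + β ^ p := by
        gcongr
        exact circleAverage_norm_rpow_le_of_mapsTo_slitPlane hA hslit (by positivity)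
          (by linarith) hr0 hr1

theorem IsCombDomain.exists_subset_compl_imaginaryRays {C : Set ℂ} (hC : IsCombDomain C) :
    ∃ β, 0 < β ∧ C ⊆ {z : ℂ | z.re = 0 ∧ β ≤ |z.im|}ᶜ := by
  obtain ⟨x, b, -, hx0, -, hb, rfl⟩ := hC
  exact ⟨b 0, hb 0, compl_subset_compl.2 fun z hz ↦ mem_iUnion.2 ⟨0, by rwa [hx0]⟩⟩

theorem one_le_hardyNumber_of_forall_memHardy {f : ℂ → ℂ}
    (hf : ∀ p : ℝ, 0 < p → p < 1 → MemHardy p f) : 1 ≤ hardyNumber f := by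
  refine le_of_forall_lt fun c hc ↦ ?_
  obtain ⟨d, hcd, hd1⟩ := exists_between hc
  have hd : d ≠ ⊤ := hd1.ne_top
  have hp0 : 0 < d.toReal := ENNReal.toReal_pos (pos_of_gt hcd).ne' hd
  have hp1 : d.toReal < 1 := ENNReal.toReal_lt_of_lt_ofReal (by simpa using hd1)
  exact hcd.trans_le (le_sSup ⟨d.toReal, hp0, hf _ hp0 hp1, (ENNReal.ofReal_toReal hd).symm⟩)

/-- The Hardy number of any comb domain is at least `1`. -/
theorem hardyNumber_comb_ge_one (C : Set ℂ) (hC : IsCombDomain C)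
    (f : ℂ → ℂ) (hf : IsRiemannMap f C) : 1 ≤ hardyNumber f := by
  obtain ⟨hfd, -, hfC⟩ := hf
  obtain ⟨β, hβ, hCβ⟩ := hC.exists_subset_compl_imaginaryRays
  have hmaps : MapsTo f (Metric.ball 0 1) {z | z.re = 0 ∧ β ≤ |z.im|}ᶜ :=
    (mapsTo_image f _).mono_right (hfC ▸ hCβ)
  exact one_le_hardyNumber_of_forall_memHardy fun p hp0 hp1 ↦
    memHardy_of_mapsTo_compl_imaginaryRays hfd hβ.le hmaps hp0.le hp1
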